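/- The generalized hypergeometric series ₄F₃(1, 1, 5/2, 3; 2, 21/8, 25/8; 1) equals (221/276480)·( 12584 − 1305·2^{1/4}·π − 2610·2^{1/4}·arcoth(2^{1/4}) + 2610·2^{1/4}·arctan(2^{1/4}) ). -/

import Mathlib

open Real

noncomputable def poch (a : ℝ) (n : ℕ) : ℝ := Polynomial.eval a (ascPochhammer ℝ n)

noncomputable def arcoth (x : ℝ) : ℝ := (1/2) * Real.log ((x + 1)/(x - 1))

/-!
Writing `B(m) = ∫₀¹ xᵐ (1 - x)^{1/4} dx`, the recurrence `(m + 9/4) B(m+1) = (m + 1) B(m)` shows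
that the `n`-th term of the series is `(3315/1024) · (n+2)/(n+1) · B(2n+3)`. Summing under the
integral sign, `∑ (n+2)/(n+1) x^{2n+3} = x³/(1 - x²) - x log(1 - x²)`, so the series equals
`(3315/1024) ∫₀¹ (1 - x)^{1/4} (x³/(1 - x²) - x log(1 - x²)) dx`. The substitution `x = 1 - u⁴`
makes the integrand rational in `u` up to logarithms, with an explicit primitive whose value at
`u = 1` involves `arctan(1/2^{1/4}) = π/2 - arctan 2^{1/4}` and `arcoth 2^{1/4}`.
-/

open Set MeasureTheory Interval

lemma poch_succ (a : ℝ) (n : ℕ) : poch a (n + 1) = poch a n * (a + n) := by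
  simp [poch, ascPochhammer_succ_right]

lemma poch_pos {a : ℝ} (ha : 0 < a) (n : ℕ) : 0 < poch a n := by
  induction n with
  | zero => simp [poch]
  | succ n ih => rw [poch_succ]; exact mul_pos ih (by positivity)

lemma continuous_one_sub_rpow {s : ℝ} (hs : 0 ≤ s) : Continuous fun x : ℝ => (1 - x) ^ s :=
  (continuous_const.sub continuous_id).rpow_const fun _ => Or.inr hs

noncomputable def betaInt (s : ℝ) (m : ℕ) : ℝ := ∫ x in (0:ℝ)..1, x ^ m * (1 - x) ^ s

section BetaIntegral

variable {s : ℝ}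

lemma betaInt_zero (hs : -1 < s) : betaInt s 0 = 1 / (s + 1) := by
  simp only [betaInt, pow_zero, one_mul]
  rw [intervalIntegral.integral_comp_sub_left (fun x => x ^ s), sub_self, sub_zero,
    integral_rpow (Or.inl hs)]
  simp [zero_rpow (by linarith : s + 1 ≠ 0)]

lemma betaInt_succ (hs : 0 ≤ s) (m : ℕ) :
    (m + s + 2) * betaInt s (m + 1) = (m + 1) * betaInt s m := by
  have hint (k : ℕ) : IntervalIntegrable (fun x : ℝ => x ^ k * (1 - x) ^ s) volume 0 1 :=
    ((continuous_pow k).mul (continuous_one_sub_rpow hs)).intervalIntegrable _ _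
  -- integrate the derivative of `x^(m+1) (1 - x)^(s+1)`, which vanishes at both ends
  have hderiv : ∀ x ∈ uIcc (0:ℝ) 1, HasDerivAt (fun y => y ^ (m + 1) * (1 - y) ^ (s + 1))
      ((m + 1) * (x ^ m * (1 - x) ^ s) - (m + s + 2) * (x ^ (m + 1) * (1 - x) ^ s)) x := by
    intro x hx
    have hx1 : 0 ≤ 1 - x := by rw [uIcc_of_le zero_le_one] at hx; linarith [hx.2]
    refine ((hasDerivAt_pow (m + 1) x).mul (((hasDerivAt_id' x).const_sub 1).rpow_const
      (p := s + 1) (Or.inr (by linarith)))).congr_deriv ?_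
    rw [add_sub_cancel_right, rpow_add_one' hx1 (by linarith)]
    push_cast
    ring
  have hftc := intervalIntegral.integral_eq_sub_of_hasDerivAt hderiv
    (((hint m).const_mul _).sub ((hint (m + 1)).const_mul _))
  rw [intervalIntegral.integral_sub ((hint m).const_mul _) ((hint (m + 1)).const_mul _),
    intervalIntegral.integral_const_mul, intervalIntegral.integral_const_mul] at hftc
  simp [zero_rpow (by linarith : s + 1 ≠ 0)] at hftc
  rw [betaInt, betaInt]
  linarith

lemma betaInt_add_two (hs : 0 ≤ s) (m : ℕ) :
    (m + s + 2) * (m + s + 3) * betaInt s (m + 2) = (m + 1) * (m + 2) * betaInt s m := by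
  have h₀ := betaInt_succ hs m
  have h₁ := betaInt_succ hs (m + 1)
  push_cast at h₁
  linear_combination (m + s + 2) * h₁ + (m + 2) * h₀

end BetaIntegral

noncomputable def oddSeriesSum (x : ℝ) : ℝ := x ^ 3 / (1 - x ^ 2) - x * log (1 - x ^ 2)

lemma hasSum_oddSeriesSum {x : ℝ} (hx : |x| < 1) :
    HasSum (fun n : ℕ => (n + 2) / (n + 1) * x ^ (2 * n + 3)) (oddSeriesSum x) := by
  have hx2 : |x ^ 2| < 1 := by rw [abs_pow]; exact pow_lt_one₀ (abs_nonneg x) hx two_ne_zero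
  have hgeom := (hasSum_geometric_of_abs_lt_one hx2).mul_left (x ^ 3)
  have hlog := (hasSum_pow_div_log_of_abs_lt_one hx2).mul_left x
  rw [show oddSeriesSum x = x ^ 3 * (1 - x ^ 2)⁻¹ + x * -log (1 - x ^ 2) by
    rw [oddSeriesSum]; ring]
  refine (hgeom.add hlog).congr_fun fun n => ?_
  field_simp
  ring

lemma hasDerivAt_arctan_add_log {c u : ℝ} (hc : 0 < c) (hu : |u| < c) :
    HasDerivAt (fun u => arctan (u / c) + (log (c + u) - log (c - u)) / 2)
      (2 * c ^ 3 / (c ^ 4 - u ^ 4)) u := by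
  obtain ⟨hlo, hhi⟩ := abs_lt.1 hu
  have hplus : c + u ≠ 0 := by linarith
  have hminus : c - u ≠ 0 := by linarith
  have hsq : c ^ 2 - u ^ 2 ≠ 0 := by nlinarith
  have harctan := ((hasDerivAt_id' u).div_const c).arctan
  have hlogp := ((hasDerivAt_id' u).const_add c).log hplus
  have hlogm := ((hasDerivAt_id' u).const_sub c).log hminus
  refine (harctan.add ((hlogp.sub hlogm).div_const 2)).congr_deriv ?_
  rw [show c ^ 4 - u ^ 4 = (c ^ 2 + u ^ 2) * (c ^ 2 - u ^ 2) by ring]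
  field_simp
  ring

namespace Hypergeometric4F3

noncomputable def integrandTerm (n : ℕ) (x : ℝ) : ℝ :=
  (n + 2) / (n + 1) * (x ^ (2 * n + 3) * (1 - x) ^ (1/4 : ℝ))

noncomputable def integrand (x : ℝ) : ℝ := (1 - x) ^ (1/4 : ℝ) * oddSeriesSum x

lemma continuous_integrandTerm (n : ℕ) : Continuous (integrandTerm n) :=
  continuous_const.mul ((continuous_pow _).mul (continuous_one_sub_rpow (by norm_num)))

lemma integrandTerm_nonneg (n : ℕ) {x : ℝ} (hx : x ∈ Icc (0:ℝ) 1) : 0 ≤ integrandTerm n x :=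
  mul_nonneg (by positivity) (mul_nonneg (pow_nonneg hx.1 _) (rpow_nonneg (by linarith [hx.2]) _))

lemma integral_integrandTerm (n : ℕ) :
    ∫ x in (0:ℝ)..1, integrandTerm n x = (n + 2) / (n + 1) * betaInt (1/4) (2 * n + 3) :=
  intervalIntegral.integral_const_mul _ _

lemma hasSum_integrandTerm {x : ℝ} (hx : x ∈ Icc (0:ℝ) 1) :
    HasSum (integrandTerm · x) (integrand x) := by
  rcases eq_or_lt_of_le hx.2 with rfl | hx1
  · simp [integrandTerm, integrand]
  · rw [integrand, mul_comm]
    refine ((hasSum_oddSeriesSum (abs_lt.2 ⟨by linarith [hx.1], hx1⟩)).mul_right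
      ((1 - x) ^ (1/4 : ℝ))).congr_fun fun n => ?_
    rw [integrandTerm]
    ring

lemma integrand_nonneg {x : ℝ} (hx : x ∈ Icc (0:ℝ) 1) : 0 ≤ integrand x :=
  (hasSum_integrandTerm hx).nonneg fun n => integrandTerm_nonneg n hx

lemma betaInt_quarter_three : betaInt (1/4) 3 = 512/3315 := by
  have h₀ := betaInt_zero (s := 1/4) (by norm_num)
  have h₁ := betaInt_succ (s := 1/4) (by norm_num) 0
  have h₂ := betaInt_succ (s := 1/4) (by norm_num) 1
  have h₃ := betaInt_succ (s := 1/4) (by norm_num) 2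
  norm_num at h₀ h₁ h₂ h₃
  linarith

lemma term_eq (n : ℕ) :
    poch 1 n * poch 1 n * poch (5/2) n * poch 3 n /
        (poch 2 n * poch (21/8) n * poch (25/8) n * (n.factorial : ℝ))
      = 3315/1024 * ((n + 2) / (n + 1) * betaInt (1/4) (2 * n + 3)) := by
  induction n with
  | zero =>
    rw [show 2 * 0 + 3 = 3 from rfl, betaInt_quarter_three]
    simp [poch]
    norm_num
  | succ n ih =>
    have hstep : poch 1 (n + 1) * poch 1 (n + 1) * poch (5/2) (n + 1) * poch 3 (n + 1) /
        (poch 2 (n + 1) * poch (21/8) (n + 1) * poch (25/8) (n + 1) * ((n + 1).factorial : ℝ))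
        = poch 1 n * poch 1 n * poch (5/2) n * poch 3 n /
            (poch 2 n * poch (21/8) n * poch (25/8) n * (n.factorial : ℝ))
          * ((n + 1) * (n + 5/2) * (n + 3) / ((n + 2) * (n + 21/8) * (n + 25/8))) := by
      have := poch_pos (by norm_num : (0:ℝ) < 2) n
      have := poch_pos (by norm_num : (0:ℝ) < 21/8) n
      have := poch_pos (by norm_num : (0:ℝ) < 25/8) n
      simp only [poch_succ, Nat.factorial_succ]
      push_cast
      field_simp
      ring
    have hB := betaInt_add_two (s := 1/4) (by norm_num) (2 * n + 3)
    rw [hstep, ih, show 2 * (n + 1) + 3 = 2 * n + 3 + 2 by ring]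
    push_cast at hB ⊢
    field_simp
    linear_combination (-(32 * (n:ℝ) + 96)) * hB

noncomputable def fourthRootTwo : ℝ := 2 ^ (1/4 : ℝ)

lemma one_lt_fourthRootTwo : 1 < fourthRootTwo :=
  one_lt_rpow (by norm_num) (by norm_num)

lemma fourthRootTwo_pow_four : fourthRootTwo ^ 4 = 2 := by
  rw [fourthRootTwo, ← rpow_natCast, ← rpow_mul (by norm_num)]
  norm_num

noncomputable def primitive (u : ℝ) : ℝ :=
  148/45 * u - 52/225 * u ^ 5 + 4/81 * u ^ 9
    - 29/45 * fourthRootTwo * (arctan (u / fourthRootTwo)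
        + (log (fourthRootTwo + u) - log (fourthRootTwo - u)) / 2)
    - 4/45 * u ^ 5 * (9 - 5 * u ^ 4) * (4 * log u + log (2 - u ^ 4))

lemma oddSeriesSum_one_sub_pow_four {u : ℝ} (hu : u ≠ 0) (h2 : 2 - u ^ 4 ≠ 0) :
    oddSeriesSum (1 - u ^ 4)
      = (1 - u ^ 4) ^ 3 / (u ^ 4 * (2 - u ^ 4)) - (1 - u ^ 4) * (4 * log u + log (2 - u ^ 4)) := by
  rw [oddSeriesSum, show 1 - (1 - u ^ 4) ^ 2 = u ^ 4 * (2 - u ^ 4) by ring,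
    log_mul (by positivity) h2, log_pow]
  push_cast
  ring

lemma hasDerivAt_primitive {u : ℝ} (hu : u ∈ Ioo (0:ℝ) 1) :
    HasDerivAt primitive (4 * u ^ 4 * oddSeriesSum (1 - u ^ 4)) u := by
  obtain ⟨hu0, hu1⟩ := hu
  have hc := one_lt_fourthRootTwo
  have h2 : 2 - u ^ 4 ≠ 0 := by linarith [pow_lt_one₀ hu0.le hu1 (n := 4) (by norm_num)]
  have hψ := hasDerivAt_arctan_add_log (c := fourthRootTwo) (u := u) (by linarith)
    (by rw [abs_of_pos hu0]; linarith)
  have hlog := ((hasDerivAt_log hu0.ne').const_mul 4).add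
    (((hasDerivAt_pow 4 u).const_sub 2).log h2)
  have hpoly (k : ℕ) (a : ℝ) := (hasDerivAt_pow k u).const_mul a
  refine (((((hasDerivAt_id' u).const_mul (148/45)).sub (hpoly 5 (52/225))).add
    (hpoly 9 (4/81))).sub (hψ.const_mul (29/45 * fourthRootTwo))).sub
    (((hpoly 5 (4/45)).mul (((hasDerivAt_pow 4 u).const_mul 5).const_sub 9)).mul hlog)
    |>.congr_deriv ?_
  rw [oddSeriesSum_one_sub_pow_four hu0.ne' h2, fourthRootTwo_pow_four]
  simp only [Pi.add_apply, Pi.mul_apply, Nat.cast_ofNat, Nat.reduceSub]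
  field_simp
  rw [fourthRootTwo_pow_four]
  ring

lemma continuousOn_primitive : ContinuousOn primitive (Icc 0 1) := by
  have hc := one_lt_fourthRootTwo
  -- isolate `u * log u`, which is continuous at `0`
  have hsplit : primitive = fun u => 148/45 * u - 52/225 * u ^ 5 + 4/81 * u ^ 9
      - 29/45 * fourthRootTwo * (arctan (u / fourthRootTwo)
          + (log (fourthRootTwo + u) - log (fourthRootTwo - u)) / 2)
      - 4/45 * (4 * u ^ 4 * (9 - 5 * u ^ 4) * (u * log u)
          + u ^ 5 * (9 - 5 * u ^ 4) * log (2 - u ^ 4)) := by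
    funext u
    rw [primitive]
    ring
  rw [hsplit]
  fun_prop (disch := rintro u ⟨h0, h1⟩; apply ne_of_gt; nlinarith [pow_le_one₀ h0 h1 (n := 4)])

lemma continuousOn_neg_primitive_comp :
    ContinuousOn (fun x => -primitive ((1 - x) ^ (1/4 : ℝ))) (Icc 0 1) := by
  refine (continuousOn_primitive.comp (continuous_one_sub_rpow (by norm_num)).continuousOn
    fun x hx => ?_).neg
  exact ⟨rpow_nonneg (by linarith [hx.2]) _,
    rpow_le_one (by linarith [hx.2]) (by linarith [hx.1]) (by norm_num)⟩

lemma hasDerivAt_neg_primitive_comp {x : ℝ} (hx : x ∈ Ioo (0:ℝ) 1) :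
    HasDerivAt (fun x => -primitive ((1 - x) ^ (1/4 : ℝ))) (integrand x) x := by
  obtain ⟨hx0, hx1⟩ := hx
  have h1x : 0 < 1 - x := by linarith
  set u := (1 - x) ^ (1/4 : ℝ) with hu
  have hu0 : 0 < u := rpow_pos_of_pos h1x _
  have hu1 : u < 1 := rpow_lt_one h1x.le (by linarith) (by norm_num)
  have hu4 : u ^ 4 = 1 - x := by
    rw [hu, ← rpow_natCast, ← rpow_mul h1x.le]
    norm_num
  have hinner := ((hasDerivAt_id' x).const_sub 1).rpow_const (p := 1/4) (Or.inl h1x.ne')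
  refine ((hasDerivAt_primitive ⟨hu0, hu1⟩).comp x hinner).neg.congr_deriv ?_
  rw [rpow_sub_one' h1x.le (by norm_num), ← hu, show 1 - u ^ 4 = x by linarith, integrand, ← hu,
    ← hu4]
  field_simp

lemma intervalIntegrable_integrand : IntervalIntegrable integrand volume 0 1 :=
  intervalIntegral.intervalIntegrable_deriv_of_nonneg
    (by rw [uIcc_of_le zero_le_one]; exact continuousOn_neg_primitive_comp)
    (by simpa using fun x hx => hasDerivAt_neg_primitive_comp hx)
    (by simpa using fun x hx => integrand_nonneg (Ioo_subset_Icc_self hx))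

lemma integral_integrand : ∫ x in (0:ℝ)..1, integrand x = primitive 1 := by
  rw [intervalIntegral.integral_eq_sub_of_hasDerivAt_of_le zero_le_one
    continuousOn_neg_primitive_comp (fun x hx => hasDerivAt_neg_primitive_comp hx)
    intervalIntegrable_integrand]
  simp [primitive]

lemma hasSum_betaInt :
    HasSum (fun n : ℕ => (n + 2) / (n + 1) * betaInt (1/4) (2 * n + 3)) (primitive 1) := by
  have hIoc : Ι (0:ℝ) 1 ⊆ Icc 0 1 := by rw [uIoc_of_le zero_le_one]; exact Ioc_subset_Icc_self
  -- the terms are nonnegative, so they dominate themselves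
  have hsum := intervalIntegral.hasSum_integral_of_dominated_convergence (μ := volume)
    integrandTerm (fun n => (continuous_integrandTerm n).aestronglyMeasurable)
    (fun n => .of_forall fun x hx => (norm_of_nonneg (integrandTerm_nonneg n (hIoc hx))).le)
    (.of_forall fun x hx => (hasSum_integrandTerm (hIoc hx)).summable)
    ((intervalIntegrable_congr fun x hx => (hasSum_integrandTerm (hIoc hx)).tsum_eq.symm).1
      intervalIntegrable_integrand)
    (.of_forall fun x hx => hasSum_integrandTerm (hIoc hx))
  rw [integral_integrand] at hsum
  exact hsum.congr_fun fun n => (integral_integrandTerm n).symm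

lemma primitive_one_eq :
    3315/1024 * primitive 1 = 221/276480 * (12584 - 1305 * fourthRootTwo * π
      - 2610 * fourthRootTwo * arcoth fourthRootTwo
      + 2610 * fourthRootTwo * arctan fourthRootTwo) := by
  have hc := one_lt_fourthRootTwo
  have harctan : arctan (1 / fourthRootTwo) = π / 2 - arctan fourthRootTwo := by
    rw [one_div, arctan_inv_of_pos (by linarith)]
  have harcoth : arcoth fourthRootTwo
      = (log (fourthRootTwo + 1) - log (fourthRootTwo - 1)) / 2 := by
    rw [arcoth, log_div (by linarith) (by linarith)]
    ring
  rw [primitive, harctan, harcoth]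
  norm_num
  ring

end Hypergeometric4F3

theorem stmt_15 :
    ∑' n : ℕ, (poch (1) n * poch (1) n * poch (5/2) n * poch (3) n) / (poch (2) n * poch (21/8) n * poch (25/8) n * (Nat.factorial n : ℝ)) * (1 : ℝ) ^ n
      = 221/276480 * (12584 - 1305 * (2:ℝ) ^ ((1:ℝ)/4) * Real.pi
          - 2610 * (2:ℝ) ^ ((1:ℝ)/4) * arcoth ((2:ℝ) ^ ((1:ℝ)/4))
          + 2610 * (2:ℝ) ^ ((1:ℝ)/4) * Real.arctan ((2:ℝ) ^ ((1:ℝ)/4))) := by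
  have hterm (n : ℕ) : poch 1 n * poch 1 n * poch (5/2) n * poch 3 n /
      (poch 2 n * poch (21/8) n * poch (25/8) n * (n.factorial : ℝ)) * (1 : ℝ) ^ n
      = 3315/1024 * ((n + 2) / (n + 1) * betaInt (1/4) (2 * n + 3)) := by
    rw [one_pow, mul_one, Hypergeometric4F3.term_eq]
  rw [tsum_congr hterm, (Hypergeometric4F3.hasSum_betaInt.mul_left (3315/1024)).tsum_eq]
  exact Hypergeometric4F3.primitive_one_eq
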